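/- Let G be an (n−4)-regular graph on n vertices (the complement of a 3-regular graph H). If H has an independent set of size tn with t ≥ δ_h = 95/194, then G admits a partition into two clusters with modularity at least 2(4δ_h² − δ_h)/(n−4). -/

import Mathlib

/-!
An independent set `V'` of `H` is a clique of the `(n - 4)`-regular graph `G = Hᶜ`, so every term
of the modularity of `V'` is explicit: with `#V' = t n` and `2m = n (n - 4)` it equals
`(4t² - t) / (n - 4)`. The modularity kernel `A_uv - d_u d_v / 2m` is symmetric with zero row sums,
hence `V'ᶜ` has the same modularity as `V'`. Finally `4t² - t` is increasing for `t ≥ 1/8`.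
-/

open Finset

/-- Modularity of a set of vertices `C` of a graph `G`. -/
noncomputable def setMod {V : Type*} [Fintype V] [DecidableEq V]
    (G : SimpleGraph V) [DecidableRel G.Adj] (C : Finset V) : ℝ :=
  (1 / (2 * (G.edgeFinset.card : ℝ))) *
    ∑ u ∈ C, ∑ v ∈ C,
      ((if G.Adj u v then (1 : ℝ) else 0)
        - (G.degree u : ℝ) * (G.degree v : ℝ) / (2 * (G.edgeFinset.card : ℝ)))

theorem Finset.sum_sum_compl_eq_of_symm {V M : Type*} [Fintype V] [DecidableEq V]
    [AddCommGroup M] (f : V → V → M) (hsymm : ∀ u v, f u v = f v u)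
    (hrow : ∀ u, ∑ v, f u v = 0) (C : Finset V) :
    ∑ u ∈ Cᶜ, ∑ v ∈ Cᶜ, f u v = ∑ u ∈ C, ∑ v ∈ C, f u v := by
  have hsplit (D : Finset V) : ∑ u ∈ D, ∑ v ∈ C, f u v + ∑ u ∈ D, ∑ v ∈ Cᶜ, f u v = 0 := by
    simp [← sum_add_distrib, sum_add_sum_compl, hrow]
  have hcross : ∑ u ∈ Cᶜ, ∑ v ∈ C, f u v = ∑ u ∈ C, ∑ v ∈ Cᶜ, f u v := by
    rw [sum_comm]
    exact sum_congr rfl fun v _ => sum_congr rfl fun u _ => hsymm u v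
  have hCc := hsplit Cᶜ
  rw [hcross] at hCc
  rw [eq_neg_of_add_eq_zero_right hCc, eq_neg_of_add_eq_zero_left (hsplit C)]

namespace SimpleGraph

variable {V : Type*} (G : SimpleGraph V) [DecidableRel G.Adj]

theorem sum_ite_adj_eq_degree [Fintype V] (u : V) :
    ∑ v, (if G.Adj u v then (1 : ℝ) else 0) = G.degree u := by
  rw [sum_boole, ← neighborFinset_eq_filter, card_neighborFinset_eq_degree]

theorem setMod_compl [Fintype V] [DecidableEq V] (C : Finset V) :
    setMod G Cᶜ = setMod G C := by
  by_cases hm : (#G.edgeFinset : ℝ) = 0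
  · simp [setMod, hm]
  unfold setMod
  congr 1
  refine sum_sum_compl_eq_of_symm _ (fun u v => by simp only [G.adj_comm u v, mul_comm])
    (fun u => ?_) C
  rw [sum_sub_distrib, sum_ite_adj_eq_degree, ← sum_div, ← mul_sum]
  have hdeg : ∑ v, (G.degree v : ℝ) = 2 * #G.edgeFinset := by
    exact_mod_cast G.sum_degrees_eq_twice_card_edges
  field_simp
  rw [hdeg]
  ring

theorem sum_sum_ite_adj_of_isClique [DecidableEq V] {C : Finset V}
    (hC : G.IsClique (C : Set V)) :
    ∑ u ∈ C, ∑ v ∈ C, (if G.Adj u v then (1 : ℝ) else 0) = #C * (#C - 1) := by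
  have hrow : ∀ u ∈ C, ∑ v ∈ C, (if G.Adj u v then (1 : ℝ) else 0) = #C - 1 := by
    intro u hu
    have hnbrs : C.filter (G.Adj u) = C.erase u := by
      ext v
      simp only [mem_filter, mem_erase]
      exact ⟨fun ⟨hv, huv⟩ => ⟨huv.ne.symm, hv⟩, fun ⟨hvu, hv⟩ => ⟨hv, hC hu hv (Ne.symm hvu)⟩⟩
    rw [sum_boole, hnbrs, card_erase_of_mem hu, Nat.cast_sub (card_pos.mpr ⟨u, hu⟩)]
    simp
  rw [sum_congr rfl hrow, sum_const, nsmul_eq_mul]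

theorem setMod_of_isClique [Fintype V] [DecidableEq V] {d : ℕ} (hG : G.IsRegularOfDegree d)
    {C : Finset V} (hC : G.IsClique (C : Set V)) :
    setMod G C = (#C * (#C - 1) - #C ^ 2 * d ^ 2 / (Fintype.card V * d))
      / (Fintype.card V * d) := by
  have hedges : 2 * (#G.edgeFinset : ℝ) = Fintype.card V * d := by
    have := G.sum_degrees_eq_twice_card_edges
    simp only [hG.degree_eq, sum_const, card_univ, smul_eq_mul] at this
    exact_mod_cast this.symm
  simp only [setMod, hedges, hG.degree_eq, sum_sub_distrib,
    sum_sum_ite_adj_of_isClique G hC, sum_const, nsmul_eq_mul]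
  ring

end SimpleGraph

/-- Completeness: let `H` be a 3-regular graph on `n` vertices and `G = Hᶜ` its
complement, an `(n−4)`-regular graph.  If `H` has an independent set `V'` of size
`t·n` with `t ≥ δ_h = 95/194`, then the two-cluster partition `{V', V∖V'}` of `G`
has modularity at least `2(4δ_h² − δ_h)/(n−4)`. -/
theorem completeness_independent_set
    {V : Type*} [Fintype V] [DecidableEq V] (H : SimpleGraph V)
    [DecidableRel H.Adj] [DecidableRel Hᶜ.Adj]
    (n : ℕ) (hn : Fintype.card V = n) (hn4 : 4 < n)
    (hreg : H.IsRegularOfDegree 3)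
    (t : ℝ) (ht : (95 : ℝ) / 194 ≤ t)
    (V' : Finset V) (hcard : (V'.card : ℝ) = t * n)
    (hind : ∀ u ∈ V', ∀ v ∈ V', u ≠ v → ¬ H.Adj u v) :
    setMod Hᶜ V' + setMod Hᶜ V'ᶜ
      ≥ 2 * (4 * ((95 : ℝ) / 194) ^ 2 - (95 : ℝ) / 194) / ((n : ℝ) - 4) := by
  have hregc : Hᶜ.IsRegularOfDegree (n - 4) := by
    convert hreg.compl using 1
    omega
  have hclique : Hᶜ.IsClique (V' : Set V) := (SimpleGraph.isClique_compl H).2 hind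
  have hd : ((n - 4 : ℕ) : ℝ) = n - 4 := by
    rw [Nat.cast_sub hn4.le, Nat.cast_ofNat]
  have hn_gt_four : (4 : ℝ) < n := by exact_mod_cast hn4
  have hmod : setMod Hᶜ V' = (4 * t ^ 2 - t) / (n - 4) := by
    rw [Hᶜ.setMod_of_isClique hregc hclique, hcard, hn, hd]
    field_simp
    ring
  rw [Hᶜ.setMod_compl, hmod, ← two_mul, ge_iff_le, mul_div_assoc]
  gcongr 2 * (?_ / _)
  nlinarith
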